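/- arXiv:2509.00229 — 2 statements merged into one kernel-verified Lean document; each statement's English description precedes it below -/
import Mathlib

section
/- Let α, α' ∈ A₊. If the divergence functionals D_α and D_{α'} are ordinally equivalent on bounded experiments — i.e., for all bounded experiments μ, ν: D_α(μ) ≥ D_α(ν) if and only if D_{α'}(μ) ≥ D_{α'}(ν) — then α = α'. -/
/-!
On an experiment that is informative only about one state `j` (signal law `w` in every state,
tilted by the likelihood ratio `exp ℓ` in state `j`), the integral defining `D_α` equals
`∑ w exp (α_j ℓ)`, and `D_α` is an injective function of it. So `D_α` separates two such
experiments exactly when their transforms `t ↦ ∑ w exp (t ℓ)` differ at `t = α_j`. If `α_j ≠ α'_j`,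
say with `α_j ≠ 0`, choose two experiments whose transforms differ by
`(eᵗ - 1)(eᵗ - e)(eᵗ - e^{α'_j})`: they have equal `D_{α'}` but different `D_α`, which ordinal
equivalence rules out.
-/

open MeasureTheory ProbabilityTheory
open scoped ENNReal NNReal

/-- A statistical experiment over the state space `Θ`. -/
structure Experiment (Θ : Type) : Type 1 where
  S : Type
  mS : MeasurableSpace S
  lam : Measure S
  sigmaFinite : SigmaFinite lam
  P : Θ → Measure S
  isProb : ∀ i, IsProbabilityMeasure (P i)
  ac : ∀ i, (P i).AbsolutelyContinuous lam

attribute [instance] Experiment.mS Experiment.sigmaFinite Experiment.isProb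

namespace Experiment

variable {Θ : Type}

/-- Bounded experiment: log-likelihood ratios are essentially bounded. -/
def IsBdd (μ : Experiment Θ) : Prop :=
  ∀ i j : Θ, i ≠ j →
    ∃ c : ℝ, ∀ᵐ s ∂μ.lam, |Real.log ((μ.P i).rnDeriv (μ.P j) s).toReal| ≤ c

/-- Product (bundle) of two experiments. -/
noncomputable def prodE (μ ν : Experiment Θ) : Experiment Θ where
  S := μ.S × ν.S
  mS := inferInstance
  lam := μ.lam.prod ν.lam
  sigmaFinite := inferInstance
  P := fun i => (μ.P i).prod (ν.P i)
  isProb := fun i => inferInstance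
  ac := fun i => Measure.AbsolutelyContinuous.prod (μ.ac i) (ν.ac i)

/-- A fully uninformative one-signal experiment. -/
noncomputable def triv (Θ : Type) : Experiment Θ where
  S := Unit
  mS := inferInstance
  lam := Measure.dirac ()
  sigmaFinite := inferInstance
  P := fun _ => Measure.dirac ()
  isProb := fun _ => inferInstance
  ac := fun _ => Measure.AbsolutelyContinuous.rfl

/-- k-fold independent product μ^{⊗k}. -/
noncomputable def pow (μ : Experiment Θ) : ℕ → Experiment Θ
  | 0 => triv Θ
  | 1 => μ
  | (k+2) => (μ.pow (k+1)).prodE μ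

/-- Mixture a·μ + (1-a)·ν of two experiments (on the disjoint union of signal spaces). -/
noncomputable def mix (a : ℝ) (μ ν : Experiment Θ) (h0 : 0 ≤ a) (h1 : a ≤ 1) :
    Experiment Θ where
  S := μ.S ⊕ ν.S
  mS := inferInstance
  lam := μ.lam.map Sum.inl + ν.lam.map Sum.inr
  sigmaFinite := by
    have embl : MeasurableEmbedding (Sum.inl : μ.S → μ.S ⊕ ν.S) :=
      ⟨Sum.inl_injective, measurable_inl, fun _ hs => hs.inl_image⟩
    have embr : MeasurableEmbedding (Sum.inr : ν.S → μ.S ⊕ ν.S) :=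
      ⟨Sum.inr_injective, measurable_inr, fun _ hs => hs.inr_image⟩
    have h1 : SigmaFinite (μ.lam.map Sum.inl) := embl.sigmaFinite_map
    have h2 : SigmaFinite (ν.lam.map Sum.inr) := embr.sigmaFinite_map
    infer_instance
  P := fun i => ENNReal.ofReal a • (μ.P i).map Sum.inl
        + ENNReal.ofReal (1-a) • (ν.P i).map Sum.inr
  isProb := fun i => by
    haveI := μ.isProb i
    haveI := ν.isProb i
    constructor
    rw [Measure.add_apply, Measure.smul_apply, Measure.smul_apply,
      Measure.map_apply measurable_inl MeasurableSet.univ,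
      Measure.map_apply measurable_inr MeasurableSet.univ]
    simp only [Set.preimage_univ, measure_univ, smul_eq_mul, mul_one]
    rw [← ENNReal.ofReal_add h0 (by linarith)]
    norm_num
  ac := fun i => by
    have hl1 : (μ.P i).map Sum.inl ≪ μ.lam.map Sum.inl + ν.lam.map Sum.inr :=
      ((μ.ac i).map measurable_inl).trans
        (Measure.absolutelyContinuous_of_le (Measure.le_add_right le_rfl))
    have hl2 : (ν.P i).map Sum.inr ≪ μ.lam.map Sum.inl + ν.lam.map Sum.inr :=
      ((ν.ac i).map measurable_inr).trans
        (Measure.absolutelyContinuous_of_le (Measure.le_add_left le_rfl))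
    intro s hs
    simp only [Measure.add_apply, Measure.smul_apply, smul_eq_mul]
    rw [hl1 hs, hl2 hs]
    simp

/-- Blackwell dominance via a Markov kernel (garbling). -/
def Blackwell (μ ν : Experiment Θ) : Prop :=
  ∃ κ : Kernel μ.S ν.S, IsMarkovKernel κ ∧ ∀ i, ν.P i = (μ.P i).bind κ

/-- Uninformative experiment: the same signal distribution in every state. -/
def Uninformative (φ : Experiment Θ) : Prop := ∀ i j : Θ, φ.P i = φ.P j

/-- Density of the state-i signal distribution w.r.t. the reference measure. -/
noncomputable def dens (μ : Experiment Θ) (i : Θ) (s : μ.S) : ℝ :=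
  ((μ.P i).rnDeriv μ.lam s).toReal

/-- Kullback–Leibler divergence KL(μ_i ‖ μ_j). -/
noncomputable def KL (μ : Experiment Θ) (i j : Θ) : ℝ :=
  ∫ s, Real.log ((μ.P i).rnDeriv (μ.P j) s).toReal ∂(μ.P i)

end Experiment

section Div

variable {Θ : Type} [Fintype Θ] [Nonempty Θ] [DecidableEq Θ]

/-- Extended Rényi divergence D_α for a non-unit weight vector α. -/
noncomputable def Dalpha (μ : Experiment Θ) (α : Θ → ℝ) : ℝ :=
  (1 / (Finset.univ.sup' Finset.univ_nonempty α - 1)) *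
    Real.log (∫ s, ∏ i, μ.dens i s ^ α i ∂μ.lam)

end Div

section Div2

variable {Θ : Type} [Fintype Θ] [Nonempty Θ] [DecidableEq Θ]

open Experiment

/-- The set A₊ of nonnegative non-unit weight vectors summing to one. -/
def Aplus (Θ : Type) [Fintype Θ] : Set (Θ → ℝ) :=
  {α | (∀ i, 0 ≤ α i) ∧ ∑ i, α i = 1 ∧ ¬ ∃ i, α i = 1}

/-- The unified divergence D_{α,β}: the extended Rényi divergence for non-unit α, and
a β-weighted sum of KL divergences when α is the unit vector e_i. -/
noncomputable def Dab (μ : Experiment Θ) (α β : Θ → ℝ) : ℝ :=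
  if h : ∃ i, α i = 1 then
    ∑ j ∈ Finset.univ.erase h.choose, β j * μ.KL h.choose j
  else Dalpha μ α

/-- The parameter space P of pairs (α,β) of probability vectors. -/
def ParamSet (Θ : Type) [Fintype Θ] : Set ((Θ → ℝ) × (Θ → ℝ)) :=
  {p | (∀ i, 0 ≤ p.1 i) ∧ (∀ i, 0 ≤ p.2 i) ∧ ∑ i, p.1 i = 1 ∧ ∑ i, p.2 i = 1}

/-- Rényi divergence R_t(μ_i ‖ μ_j), with R_1 = KL. -/
noncomputable def Renyi (μ : Experiment Θ) (i j : Θ) (t : ℝ) : ℝ :=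
  if t = 1 then μ.KL i j
  else (1 / (t - 1)) * Real.log (∫ s, μ.dens i s ^ t * μ.dens j s ^ (1 - t) ∂μ.lam)

/-- The set Ψ of direction vectors. -/
def PsiSet (Θ : Type) [Fintype Θ] : Set (Θ → ℝ) :=
  {ψ | ∑ i, ψ i = 0 ∧ ∃ k, ψ k = 1}

/-- α^{γ,ψ} = e_k + (γ-1)ψ. -/
noncomputable def alphaGP (k : Θ) (γ : ℝ) (ψ : Θ → ℝ) : Θ → ℝ :=
  fun i => (if i = k then (1 : ℝ) else 0) + (γ - 1) * ψ i

/-- The generalized divergence D_{γ,ψ} with γ ∈ [1/|Θ|, ∞] (∞ encoded as ⊤ in ℝ≥0∞). -/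
noncomputable def Dgp (μ : Experiment Θ) (γ : ℝ≥0∞) (ψ : Θ → ℝ) : ℝ :=
  if h : ∃ k, ψ k = 1 then
    if γ = ⊤ then Real.log (essSup (fun s => ∏ i, μ.dens i s ^ ψ i) μ.lam)
    else if γ = 1 then ∑ l ∈ Finset.univ.erase h.choose, (-(ψ l)) * μ.KL h.choose l
    else
      (1 / (Finset.univ.sup' Finset.univ_nonempty (alphaGP h.choose γ.toReal ψ) - 1)) *
        Real.log (∫ s, ∏ i, μ.dens i s ^ alphaGP h.choose γ.toReal ψ i ∂μ.lam)
  else 0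

/-- The compact parameter space [1/|Θ|, ∞] × Ψ. -/
def GammaPsiSet (Θ : Type) [Fintype Θ] : Set (ℝ≥0∞ × (Θ → ℝ)) :=
  {p | ((Fintype.card Θ : ℝ≥0∞))⁻¹ ≤ p.1 ∧ p.2 ∈ PsiSet Θ}

/-- R_∞(μ_i ‖ μ_j) = log esssup dμ_i/dμ_j. -/
noncomputable def Rinf (μ : Experiment Θ) (i j : Θ) : ℝ :=
  Real.log (essSup (fun s => ((μ.P i).rnDeriv (μ.P j) s).toReal) μ.lam)

end Div2

section Axioms

variable {Θ : Type}

open Experiment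

/-- C is nonnegative on bounded experiments (i.e. C : 𝓔 → ℝ₊). -/
def NonnegCost (C : Experiment Θ → ℝ) : Prop := ∀ μ : Experiment Θ, μ.IsBdd → 0 ≤ C μ

def BlackwellMonotone (C : Experiment Θ → ℝ) : Prop :=
  ∀ μ ν : Experiment Θ, μ.IsBdd → ν.IsBdd → μ.Blackwell ν → C ν ≤ C μ

def SubAdditive (C : Experiment Θ → ℝ) : Prop :=
  ∀ μ ν : Experiment Θ, μ.IsBdd → ν.IsBdd → C (μ.prodE ν) ≤ C μ + C ν

def AdditiveCost (C : Experiment Θ → ℝ) : Prop :=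
  ∀ μ ν : Experiment Θ, μ.IsBdd → ν.IsBdd → C (μ.prodE ν) = C μ + C ν

def IdentityAdditive (C : Experiment Θ → ℝ) : Prop :=
  ∀ μ : Experiment Θ, μ.IsBdd → ∀ k : ℕ, 1 ≤ k → C (μ.pow k) = (k : ℝ) * C μ

def MixtureConvex (C : Experiment Θ → ℝ) : Prop :=
  ∀ μ ν : Experiment Θ, μ.IsBdd → ν.IsBdd → ∀ a : ℝ, ∀ (h0 : 0 < a) (h1 : a < 1),
    C (Experiment.mix a μ ν h0.le h1.le) ≤ a * C μ + (1 - a) * C ν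

def MixtureLinear (C : Experiment Θ → ℝ) : Prop :=
  ∀ μ ν : Experiment Θ, μ.IsBdd → ν.IsBdd → ∀ a : ℝ, ∀ (h0 : 0 < a) (h1 : a < 1),
    C (Experiment.mix a μ ν h0.le h1.le) = a * C μ + (1 - a) * C ν

def DilutionLinear (C : Experiment Θ → ℝ) : Prop :=
  ∀ μ φ : Experiment Θ, μ.IsBdd → φ.IsBdd → φ.Uninformative →
    ∀ a : ℝ, ∀ (h0 : 0 < a) (h1 : a < 1),
      C (Experiment.mix a μ φ h0.le h1.le) = a * C μ + (1 - a) * C φ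

end Axioms


open MeasureTheory Real

namespace Experiment

variable {Θ S : Type}

/- Since `Real.log 0 = 0`, this holds even when some likelihood ratios vanish; it is only
applied below to experiments with positive densities. -/
theorem isBdd_of_finite (μ : Experiment Θ) [Finite μ.S] : μ.IsBdd := by
  intro i j _
  obtain ⟨c, hc⟩ :=
    (Set.finite_range fun s => |Real.log ((μ.P i).rnDeriv (μ.P j) s).toReal|).bddAbove
  exact ⟨c, ae_of_all _ fun s => hc ⟨s, rfl⟩⟩

section OfDensity

variable [Fintype S] [MeasurableSpace S] [MeasurableSingletonClass S]

noncomputable def ofDensity (f : Θ → S → ℝ) (hf : ∀ i s, 0 ≤ f i s)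
    (hf1 : ∀ i, ∑ s, f i s = 1) : Experiment Θ where
  S := S
  mS := inferInstance
  lam := Measure.count
  sigmaFinite := inferInstance
  P i := Measure.count.withDensity fun s => ENNReal.ofReal (f i s)
  isProb i := ⟨by
    rw [withDensity_apply _ MeasurableSet.univ, Measure.restrict_univ, lintegral_count,
      tsum_fintype, ← ENNReal.ofReal_sum_of_nonneg fun s _ => hf i s, hf1, ENNReal.ofReal_one]⟩
  ac _ := withDensity_absolutelyContinuous _ _

variable {f : Θ → S → ℝ} {hf : ∀ i s, 0 ≤ f i s} {hf1 : ∀ i, ∑ s, f i s = 1}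

theorem dens_ofDensity (i : Θ) (s : S) : (ofDensity f hf hf1).dens i s = f i s := by
  have h := Measure.ae_count_iff.1 (Measure.rnDeriv_withDensity Measure.count
    (measurable_of_finite fun s => ENNReal.ofReal (f i s))) s
  exact (congrArg ENNReal.toReal h).trans (ENNReal.toReal_ofReal (hf i s))

theorem isBdd_ofDensity : (ofDensity f hf hf1).IsBdd :=
  have : Finite (ofDensity f hf hf1).S := inferInstanceAs (Finite S)
  isBdd_of_finite _

theorem integral_prod_dens_rpow_ofDensity [Fintype Θ] (α : Θ → ℝ) :
    ∫ s, ∏ i, (ofDensity f hf hf1).dens i s ^ α i ∂(ofDensity f hf hf1).lam =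
      ∑ s, ∏ i, f i s ^ α i := by
  change ∫ s : S, ∏ i, (ofDensity f hf hf1).dens i s ^ α i ∂Measure.count = _
  simp only [dens_ofDensity, integral_count]

end OfDensity

variable [DecidableEq Θ]

noncomputable def tiltDensity (j : Θ) (w ℓ : S → ℝ) (i : Θ) (s : S) : ℝ :=
  w s * if i = j then exp (ℓ s) else 1

theorem prod_tiltDensity_rpow [Fintype Θ] {j : Θ} {w : S → ℝ} (hw : ∀ s, 0 < w s)
    (ℓ : S → ℝ) {α : Θ → ℝ} (hα : ∑ i, α i = 1) (s : S) :
    ∏ i, tiltDensity j w ℓ i s ^ α i = w s * exp (ℓ s * α j) := by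
  have hite : ∀ i, 0 ≤ (if i = j then exp (ℓ s) else 1) := fun i => by positivity
  simp only [tiltDensity, mul_rpow (hw s).le (hite _), Finset.prod_mul_distrib,
    ← rpow_sum_of_pos (hw s), hα, rpow_one, exp_mul]
  rw [Finset.prod_eq_single j (fun i _ hij => by rw [if_neg hij, one_rpow]) (by simp),
    if_pos rfl]

variable [Fintype S] [MeasurableSpace S] [MeasurableSingletonClass S]

noncomputable def tilt (j : Θ) (w ℓ : S → ℝ) (hw : ∀ s, 0 < w s) (hw1 : ∑ s, w s = 1)
    (hℓ : ∑ s, w s * exp (ℓ s) = 1) : Experiment Θ :=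
  ofDensity (tiltDensity j w ℓ) (fun i s => by unfold tiltDensity; have := hw s; positivity)
    (fun i => by by_cases hij : i = j <;> simp [tiltDensity, hij, hw1, hℓ])

variable {j : Θ} {w ℓ : S → ℝ} {hw : ∀ s, 0 < w s} {hw1 : ∑ s, w s = 1}
  {hℓ : ∑ s, w s * exp (ℓ s) = 1}

theorem isBdd_tilt : (tilt j w ℓ hw hw1 hℓ).IsBdd := isBdd_ofDensity

variable [Fintype Θ] {α : Θ → ℝ}

theorem integral_prod_dens_rpow_tilt (hα : ∑ i, α i = 1) :
    ∫ s, ∏ i, (tilt j w ℓ hw hw1 hℓ).dens i s ^ α i ∂(tilt j w ℓ hw hw1 hℓ).lam =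
      ∑ s, w s * exp (ℓ s * α j) := by
  rw [tilt, integral_prod_dens_rpow_ofDensity]
  simp only [prod_tiltDensity_rpow hw ℓ hα]

theorem integral_prod_dens_rpow_tilt_pos (hα : ∑ i, α i = 1) :
    0 < ∫ s, ∏ i, (tilt j w ℓ hw hw1 hℓ).dens i s ^ α i ∂(tilt j w ℓ hw hw1 hℓ).lam := by
  rw [integral_prod_dens_rpow_tilt hα]
  exact Finset.sum_pos (fun s _ => by have := hw s; positivity)
    (Finset.nonempty_of_sum_ne_zero (hw1 ▸ one_ne_zero))

end Experiment


section Renyi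

open Experiment

variable {Θ : Type} [Fintype Θ] [Nonempty Θ]

theorem sup'_ne_one_of_mem_Aplus {α : Θ → ℝ} (hα : α ∈ Aplus Θ) :
    Finset.univ.sup' Finset.univ_nonempty α ≠ 1 := by
  obtain ⟨i, -, hi⟩ := Finset.exists_mem_eq_sup' Finset.univ_nonempty α
  exact hi ▸ fun h => hα.2.2 ⟨i, h⟩

theorem Dalpha_eq_Dalpha_iff {α : Θ → ℝ} (hα : α ∈ Aplus Θ) {μ ν : Experiment Θ}
    (hμ : 0 < ∫ s, ∏ i, μ.dens i s ^ α i ∂μ.lam) (hν : 0 < ∫ s, ∏ i, ν.dens i s ^ α i ∂ν.lam) :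
    Dalpha μ α = Dalpha ν α ↔
      ∫ s, ∏ i, μ.dens i s ^ α i ∂μ.lam = ∫ s, ∏ i, ν.dens i s ^ α i ∂ν.lam := by
  rw [Dalpha, Dalpha,
    mul_right_inj' (one_div_ne_zero (sub_ne_zero.2 (sup'_ne_one_of_mem_Aplus hα)))]
  exact log_injOn_pos.eq_iff hμ hν

theorem Dalpha_tilt_eq_Dalpha_tilt_iff [DecidableEq Θ] {α : Θ → ℝ} (hα : α ∈ Aplus Θ) {j : Θ}
    {S S' : Type} [Fintype S] [MeasurableSpace S] [MeasurableSingletonClass S]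
    [Fintype S'] [MeasurableSpace S'] [MeasurableSingletonClass S']
    {w ℓ : S → ℝ} {hw : ∀ s, 0 < w s} {hw1 : ∑ s, w s = 1} {hℓ : ∑ s, w s * exp (ℓ s) = 1}
    {w' ℓ' : S' → ℝ} {hw' : ∀ s, 0 < w' s} {hw1' : ∑ s, w' s = 1}
    {hℓ' : ∑ s, w' s * exp (ℓ' s) = 1} :
    Dalpha (tilt j w ℓ hw hw1 hℓ) α = Dalpha (tilt j w' ℓ' hw' hw1' hℓ') α ↔
      ∑ s, w s * exp (ℓ s * α j) = ∑ s, w' s * exp (ℓ' s * α j) := by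
  rw [Dalpha_eq_Dalpha_iff hα (integral_prod_dens_rpow_tilt_pos hα.2.1)
    (integral_prod_dens_rpow_tilt_pos hα.2.1), integral_prod_dens_rpow_tilt hα.2.1,
    integral_prod_dens_rpow_tilt hα.2.1]

end Renyi

section Ordinal

variable {Θ : Type} {D D' : Experiment Θ → ℝ}

def OrdinallyEquivalent (D D' : Experiment Θ → ℝ) : Prop :=
  ∀ μ ν : Experiment Θ, μ.IsBdd → ν.IsBdd → (D ν ≤ D μ ↔ D' ν ≤ D' μ)

theorem OrdinallyEquivalent.symm (h : OrdinallyEquivalent D D') : OrdinallyEquivalent D' D :=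
  fun μ ν hμ hν => (h μ ν hμ hν).symm

theorem OrdinallyEquivalent.eq_iff (h : OrdinallyEquivalent D D') {μ ν : Experiment Θ}
    (hμ : μ.IsBdd) (hν : ν.IsBdd) : D μ = D ν ↔ D' μ = D' ν := by
  rw [le_antisymm_iff, le_antisymm_iff, h ν μ hν hμ, h μ ν hμ hν]

end Ordinal

section Witness

/- The coefficients of odd and of even degree of `(x - 1)(x - e)(x - e^q)`, placed at the
log-likelihood ratios equal to those degrees; the common atom at `-1` makes both normalizable. -/
noncomputable def massOdd (q : ℝ) : Fin 3 → ℝ :=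
  ![exp 1 * exp q + exp 1 + exp q, 1, exp 1 * (exp 1 + 1) * (1 + exp 1 + exp q)]

noncomputable def massEven (q : ℝ) : Fin 3 → ℝ :=
  ![exp 1 * exp q, 1 + exp 1 + exp q, exp 1 * (exp 1 + 1) * (1 + exp 1 + exp q)]

def llrOdd : Fin 3 → ℝ := ![1, 3, -1]

def llrEven : Fin 3 → ℝ := ![0, 2, -1]

theorem sum_massOdd_sub_sum_massEven (q t : ℝ) :
    ∑ s, massOdd q s * exp (llrOdd s * t) - ∑ s, massEven q s * exp (llrEven s * t) =
      (exp t - 1) * (exp t - exp 1) * (exp t - exp q) := by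
  have h2 : exp (2 * t) = exp t ^ 2 := by rw [← exp_nat_mul]; norm_num
  have h3 : exp (3 * t) = exp t ^ 3 := by rw [← exp_nat_mul]; norm_num
  simp only [Fin.sum_univ_three, massOdd, massEven, llrOdd, llrEven, Matrix.cons_val_zero,
    Matrix.cons_val_one, Matrix.cons_val_two, Matrix.head_cons, Matrix.tail_cons, one_mul,
    zero_mul, exp_zero, h2, h3]
  ring

theorem sum_massEven_mul_exp_llrEven (q : ℝ) :
    ∑ s, massEven q s * exp (llrEven s) = ∑ s, massEven q s := by
  have h2 : exp 2 = exp 1 ^ 2 := by rw [← exp_nat_mul]; norm_num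
  have hinv : exp (-1) * exp 1 = 1 := by rw [← exp_add]; norm_num
  simp only [Fin.sum_univ_three, massEven, llrEven, Matrix.cons_val_zero,
    Matrix.cons_val_one, Matrix.cons_val_two, Matrix.head_cons, Matrix.tail_cons, exp_zero, h2]
  linear_combination (1 + exp 1 + exp q) * (exp 1 + 1) * hinv

theorem massOdd_pos (q : ℝ) (s : Fin 3) : 0 < massOdd q s := by
  fin_cases s <;> simp only [massOdd, Fin.zero_eta, Fin.mk_one, Fin.reduceFinMk, Fin.isValue,
    Matrix.cons_val_zero, Matrix.cons_val_one, Matrix.cons_val] <;> positivity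

theorem massEven_pos (q : ℝ) (s : Fin 3) : 0 < massEven q s := by
  fin_cases s <;> simp only [massEven, Fin.zero_eta, Fin.mk_one, Fin.reduceFinMk, Fin.isValue,
    Matrix.cons_val_zero, Matrix.cons_val_one, Matrix.cons_val] <;> positivity

theorem sum_massEven_pos (q : ℝ) : 0 < ∑ s, massEven q s :=
  Finset.sum_pos (fun s _ => massEven_pos q s) Finset.univ_nonempty

theorem sum_massOdd (q : ℝ) : ∑ s, massOdd q s = ∑ s, massEven q s := by
  simpa [sub_eq_zero] using sum_massOdd_sub_sum_massEven q 0

theorem sum_massOdd_mul_exp_llrOdd (q : ℝ) :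
    ∑ s, massOdd q s * exp (llrOdd s) = ∑ s, massEven q s := by
  have h := sum_massOdd_sub_sum_massEven q 1
  simp only [mul_one, sub_self, mul_zero, zero_mul, sub_eq_zero] at h
  rw [h, sum_massEven_mul_exp_llrEven]

variable {Θ : Type} [DecidableEq Θ]

noncomputable def witnessOdd (j : Θ) (q : ℝ) : Experiment Θ :=
  Experiment.tilt j (fun s => massOdd q s / ∑ s, massEven q s) llrOdd
    (fun s => div_pos (massOdd_pos q s) (sum_massEven_pos q))
    (by rw [← Finset.sum_div, sum_massOdd, div_self (sum_massEven_pos q).ne'])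
    (by simp_rw [div_mul_eq_mul_div]
        rw [← Finset.sum_div, sum_massOdd_mul_exp_llrOdd, div_self (sum_massEven_pos q).ne'])

noncomputable def witnessEven (j : Θ) (q : ℝ) : Experiment Θ :=
  Experiment.tilt j (fun s => massEven q s / ∑ s, massEven q s) llrEven
    (fun s => div_pos (massEven_pos q s) (sum_massEven_pos q))
    (by rw [← Finset.sum_div, div_self (sum_massEven_pos q).ne'])
    (by simp_rw [div_mul_eq_mul_div]
        rw [← Finset.sum_div, sum_massEven_mul_exp_llrEven, div_self (sum_massEven_pos q).ne'])

theorem Dalpha_witnessOdd_eq_Dalpha_witnessEven_iff [Fintype Θ] [Nonempty Θ] {α : Θ → ℝ}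
    (hα : α ∈ Aplus Θ) (j : Θ) (q : ℝ) :
    Dalpha (witnessOdd j q) α = Dalpha (witnessEven j q) α ↔ α j = 0 ∨ α j = 1 ∨ α j = q := by
  rw [witnessOdd, witnessEven, Dalpha_tilt_eq_Dalpha_tilt_iff hα, ← sub_eq_zero]
  simp_rw [div_mul_eq_mul_div]
  rw [← Finset.sum_div, ← Finset.sum_div, ← sub_div, div_eq_zero_iff,
    sum_massOdd_sub_sum_massEven]
  simp [sub_eq_zero, (sum_massEven_pos q).ne', or_assoc]

end Witness

section Stmt16

variable {Θ : Type} [Fintype Θ] [Nonempty Θ] [DecidableEq Θ]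

theorem Dalpha_ordinal_unique_general
    (α α' : Θ → ℝ) (hα : α ∈ Aplus Θ) (hα' : α' ∈ Aplus Θ)
    (h : ∀ μ ν : Experiment Θ, μ.IsBdd → ν.IsBdd →
      (Dalpha ν α ≤ Dalpha μ α ↔ Dalpha ν α' ≤ Dalpha μ α')) :
    α = α' := by
  change OrdinallyEquivalent (Dalpha · α) (Dalpha · α') at h
  by_contra hne
  obtain ⟨j, hj⟩ := Function.ne_iff.mp hne
  wlog hj0 : α j ≠ 0 generalizing α α'
  · exact this α' α hα' hα h.symm (Ne.symm hne) (Ne.symm hj) (by rwa [not_not.1 hj0, ne_comm] at hj)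
  have hα'_eq := (Dalpha_witnessOdd_eq_Dalpha_witnessEven_iff hα' j (α' j)).2 (Or.inr (Or.inr rfl))
  rcases (Dalpha_witnessOdd_eq_Dalpha_witnessEven_iff hα j (α' j)).1
    ((h.eq_iff Experiment.isBdd_tilt Experiment.isBdd_tilt).2 hα'_eq) with h0 | h1 | hq
  · exact hj0 h0
  · exact hα.2.2 ⟨j, h1⟩
  · exact hj hq

/-- **Claim (ordinal uniqueness of Rényi divergences).** If two extended Rényi divergences
`D_α`, `D_{α'}` with `α, α' ∈ A₊` are ordinally equivalent on bounded experiments, then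
`α = α'`. -/
theorem Dalpha_ordinal_unique
    (hΘ : 2 ≤ Fintype.card Θ) (α α' : Θ → ℝ) (hα : α ∈ Aplus Θ) (hα' : α' ∈ Aplus Θ)
    (h : ∀ μ ν : Experiment Θ, μ.IsBdd → ν.IsBdd →
      (Dalpha ν α ≤ Dalpha μ α ↔ Dalpha ν α' ≤ Dalpha μ α')) :
    α = α' :=
  Dalpha_ordinal_unique_general α α' hα hα' h

end Stmt16
end

section
/- Let β = (β_{ij})_{i,j∈Θ} and β' = (β'_{ij})_{i,j∈Θ} be nonnegative weight matrices, and define the weighted KL functionals K(μ) := Σ_{i,j∈Θ, i≠j} β_{ij} KL(μ_i‖μ_j) and K'(μ) := Σ_{i,j∈Θ, i≠j} β'_{ij} KL(μ_i‖μ_j) on bounded experiments. If K and K' are ordinally equivalent — i.e., for all bounded experiments μ, ν: K(μ) ≥ K(ν) if and only if K'(μ) ≥ K'(ν) — then there exists λ > 0 such that β' = λ·β. -/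
/-!
A diluted Bernoulli experiment, which with probability `a` emits a Bernoulli(`p i`) signal in
state `i` and otherwise an uninformative one, has `KL(μ_i ‖ μ_j) = a · kl(p i, p j)`. On these
experiments the two functionals are `a · F p` and `a · F' p`, where `F`, `F'` are the `β`- and
`β'`-weighted sums of binary KL divergences, and since the dilution ratio `a / b` of two
experiments is arbitrary, ordinal equivalence forces `F' = l · F` with `l > 0`.
Hence the weighted sum with coefficients `c = β' - l β` vanishes identically. Its mixed second
difference in the coordinates `p i`, `p j` (all other coordinates at `1/2`) kills every term
except `c i j (p i - 1/2) log ((1 - p j) / p j) + c j i (p j - 1/2) log ((1 - p i) / p i)`,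
and two evaluations of this give `c i j = 0`.
-/

open MeasureTheory ProbabilityTheory
open scoped ENNReal NNReal

open Finset

noncomputable def bernoulliKL (x y : ℝ) : ℝ :=
  x * Real.log (x / y) + (1 - x) * Real.log ((1 - x) / (1 - y))

lemma bernoulliKL_nonneg {x y : ℝ} (hx : x ∈ Set.Ioo (0 : ℝ) 1) (hy : y ∈ Set.Ioo (0 : ℝ) 1) :
    0 ≤ bernoulliKL x y := by
  have hy0 : y ≠ 0 := hy.1.ne'
  have hy1 : 1 - y ≠ 0 := (sub_pos.2 hy.2).ne'
  have hsplit : bernoulliKL x y = y * InformationTheory.klFun (x / y)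
      + (1 - y) * InformationTheory.klFun ((1 - x) / (1 - y)) := by
    simp only [bernoulliKL, InformationTheory.klFun]
    field_simp
    ring
  rw [hsplit]
  exact add_nonneg
    (mul_nonneg hy.1.le (InformationTheory.klFun_nonneg (div_nonneg hx.1.le hy.1.le)))
    (mul_nonneg (sub_pos.2 hy.2).le
      (InformationTheory.klFun_nonneg (div_nonneg (sub_pos.2 hx.2).le (sub_pos.2 hy.2).le)))

lemma bernoulliKL_eq_sub {x y : ℝ} (hx : x ∈ Set.Ioo (0 : ℝ) 1) (hy : y ∈ Set.Ioo (0 : ℝ) 1) :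
    bernoulliKL x y
      = x * (Real.log x - Real.log y) + (1 - x) * (Real.log (1 - x) - Real.log (1 - y)) := by
  rw [bernoulliKL, Real.log_div hx.1.ne' hy.1.ne',
    Real.log_div (sub_pos.2 hx.2).ne' (sub_pos.2 hy.2).ne']

lemma bernoulliKL_mixedDiff {s t : ℝ} (hs : s ∈ Set.Ioo (0 : ℝ) 1) (ht : t ∈ Set.Ioo (0 : ℝ) 1) :
    bernoulliKL s t - bernoulliKL s (1 / 2) - bernoulliKL (1 / 2) t + bernoulliKL (1 / 2) (1 / 2)
      = (s - 1 / 2) * Real.log ((1 - t) / t) := by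
  have half : (1 / 2 : ℝ) ∈ Set.Ioo 0 1 := by norm_num
  rw [bernoulliKL_eq_sub hs ht, bernoulliKL_eq_sub hs half, bernoulliKL_eq_sub half ht,
    bernoulliKL_eq_sub half half, Real.log_div (sub_pos.2 ht.2).ne' ht.1.ne',
    show (1 : ℝ) - 1 / 2 = 1 / 2 by norm_num]
  ring

namespace Experiment

section FiniteSignals

variable {Θ X : Type} [Fintype X] [MeasurableSpace X] [MeasurableSingletonClass X]

noncomputable def ofWeights (w : Θ → X → ℝ) (hw : ∀ i x, 0 ≤ w i x) (hw1 : ∀ i, ∑ x, w i x = 1) :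
    Experiment Θ where
  S := X
  mS := inferInstance
  lam := Measure.count
  sigmaFinite := inferInstance
  P i := Measure.count.withDensity fun x => ENNReal.ofReal (w i x)
  isProb i := ⟨by
    rw [withDensity_apply _ MeasurableSet.univ, Measure.restrict_univ, lintegral_count,
      tsum_fintype, ← ENNReal.ofReal_sum_of_nonneg fun x _ => hw i x, hw1, ENNReal.ofReal_one]⟩
  ac _ := withDensity_absolutelyContinuous _ _

lemma integral_llr_withDensity_count {u v : X → ℝ} (hu : ∀ x, 0 ≤ u x)
    (hv : ∀ x, 0 < v x) :
    ∫ x, llr (Measure.count.withDensity fun x => ENNReal.ofReal (u x))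
        (Measure.count.withDensity fun x => ENNReal.ofReal (v x)) x
      ∂(Measure.count.withDensity fun x => ENNReal.ofReal (u x))
      = ∑ x, u x * Real.log (u x / v x) := by
  set μ := Measure.count.withDensity fun x => ENNReal.ofReal (u x)
  set ν := Measure.count.withDensity fun x => ENNReal.ofReal (v x)
  have hμν : μ = ν.withDensity fun x => ENNReal.ofReal (u x / v x) := by
    simp only [μ, ν]
    rw [← withDensity_mul _ (measurable_of_finite _) (measurable_of_finite _)]
    congr 1
    funext x
    rw [Pi.mul_apply, ← ENNReal.ofReal_mul (hv x).le, mul_div_cancel₀ _ (hv x).ne']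
  have hrn : μ.rnDeriv ν =ᵐ[μ] fun x => ENNReal.ofReal (u x / v x) := by
    rw [hμν]
    exact (withDensity_absolutelyContinuous _ _).ae_le
      (Measure.rnDeriv_withDensity _ (measurable_of_finite _))
  have : IsFiniteMeasure μ := isFiniteMeasure_withDensity_ofReal Integrable.of_finite.2
  rw [integral_congr_ae (hrn.mono fun x hx => by rw [llr, hx]),
    integral_fintype (.of_finite)]
  refine sum_congr rfl fun x _ => ?_
  simp [μ, Measure.real, withDensity_apply, hu x,
    ENNReal.toReal_ofReal (div_nonneg (hu x) (hv x).le)]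

variable {w : Θ → X → ℝ} {hw : ∀ i x, 0 ≤ w i x} {hw1 : ∀ i, ∑ x, w i x = 1}

lemma isBdd_ofWeights : (ofWeights w hw hw1).IsBdd := fun i j _ =>
  let ⟨c, hc⟩ := Finite.exists_le fun x : X =>
    |llr ((ofWeights w hw hw1).P i) ((ofWeights w hw hw1).P j) x|
  ⟨c, ae_of_all _ hc⟩

lemma KL_ofWeights (hpos : ∀ i x, 0 < w i x) (i j : Θ) :
    (ofWeights w hw hw1).KL i j = ∑ x, w i x * Real.log (w i x / w j x) :=
  integral_llr_withDensity_count (X := X) (hw i) (hpos j)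

end FiniteSignals

variable {Θ : Type}

noncomputable def dilutedBernoulliWeights (a : ℝ) (p : Θ → ℝ) (i : Θ) : Fin 3 → ℝ :=
  ![a * p i, a * (1 - p i), 1 - a]

lemma dilutedBernoulliWeights_pos {a : ℝ} {p : Θ → ℝ} (ha : a ∈ Set.Ioo (0 : ℝ) 1)
    (hp : ∀ i, p i ∈ Set.Ioo (0 : ℝ) 1) (i : Θ) (x : Fin 3) :
    0 < dilutedBernoulliWeights a p i x := by
  obtain ⟨ha0, ha1⟩ := ha
  obtain ⟨hp0, hp1⟩ := hp i
  fin_cases x <;> simp [dilutedBernoulliWeights] <;> nlinarith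

noncomputable def dilutedBernoulli (a : ℝ) (p : Θ → ℝ) (ha : a ∈ Set.Ioo (0 : ℝ) 1)
    (hp : ∀ i, p i ∈ Set.Ioo (0 : ℝ) 1) : Experiment Θ :=
  ofWeights (dilutedBernoulliWeights a p) (fun i x => (dilutedBernoulliWeights_pos ha hp i x).le)
    (fun i => by simp [dilutedBernoulliWeights, Fin.sum_univ_three]; ring)

lemma isBdd_dilutedBernoulli {a : ℝ} {p : Θ → ℝ} (ha : a ∈ Set.Ioo (0 : ℝ) 1)
    (hp : ∀ i, p i ∈ Set.Ioo (0 : ℝ) 1) : (dilutedBernoulli a p ha hp).IsBdd :=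
  isBdd_ofWeights

lemma KL_dilutedBernoulli {a : ℝ} {p : Θ → ℝ} (ha : a ∈ Set.Ioo (0 : ℝ) 1)
    (hp : ∀ i, p i ∈ Set.Ioo (0 : ℝ) 1) (i j : Θ) :
    (dilutedBernoulli a p ha hp).KL i j = a * bernoulliKL (p i) (p j) := by
  refine (KL_ofWeights (dilutedBernoulliWeights_pos ha hp) i j).trans ?_
  rw [Fin.sum_univ_three]
  simp only [dilutedBernoulliWeights, Matrix.cons_val_zero, Matrix.cons_val_one,
    Matrix.cons_val_two, Matrix.tail_cons, Matrix.head_cons, mul_div_mul_left _ _ ha.1.ne',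
    div_self (sub_pos.2 ha.2).ne', Real.log_one, bernoulliKL]
  ring

end Experiment

section WeightedPairSum

variable {Θ : Type} [DecidableEq Θ]

noncomputable def testVector (i j : Θ) (s t : ℝ) : Θ → ℝ :=
  fun k => if k = i then s else if k = j then t else 1 / 2

lemma testVector_mem_Ioo {i j : Θ} {s t : ℝ} (hs : s ∈ Set.Ioo (0 : ℝ) 1)
    (ht : t ∈ Set.Ioo (0 : ℝ) 1) (k : Θ) : testVector i j s t k ∈ Set.Ioo (0 : ℝ) 1 := by
  unfold testVector
  split_ifs
  exacts [hs, ht, by norm_num]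

variable [Fintype Θ]

lemma sum_sum_erase_eq_add_of_support {M : Type*} [AddCommMonoid M] {f : Θ → Θ → M} {i j : Θ}
    (hij : i ≠ j) (hf : ∀ k l, k ≠ l → (k, l) ≠ (i, j) → (k, l) ≠ (j, i) → f k l = 0) :
    ∑ k, ∑ l ∈ univ.erase k, f k l = f i j + f j i := by
  rw [sum_eq_add_of_mem i j (mem_univ i) (mem_univ j) hij]
  · congr 1
    · refine sum_eq_single_of_mem j (mem_erase.2 ⟨hij.symm, mem_univ j⟩) fun l hl hlj => ?_
      exact hf i l (mem_erase.1 hl).1.symm (by simp [hlj]) (by simp [hij])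
    · refine sum_eq_single_of_mem i (mem_erase.2 ⟨hij, mem_univ i⟩) fun l hl hli => ?_
      exact hf j l (mem_erase.1 hl).1.symm (by simp [hij.symm]) (by simp [hli])
  · rintro k - ⟨hki, hkj⟩
    exact sum_eq_zero fun l hl => hf k l (mem_erase.1 hl).1.symm (by simp [hki]) (by simp [hkj])

noncomputable def weightedPairSum (c D : Θ → Θ → ℝ) : ℝ :=
  ∑ i, ∑ j ∈ univ.erase i, c i j * D i j

lemma weightedPairSum_nonneg {c D : Θ → Θ → ℝ} (hc : ∀ i j, 0 ≤ c i j) (hD : ∀ i j, 0 ≤ D i j) :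
    0 ≤ weightedPairSum c D :=
  sum_nonneg fun i _ => sum_nonneg fun j _ => mul_nonneg (hc i j) (hD i j)

lemma weightedPairSum_mul_right (c D : Θ → Θ → ℝ) (a : ℝ) :
    weightedPairSum c (fun i j => a * D i j) = a * weightedPairSum c D := by
  simp only [weightedPairSum, mul_sum]
  exact sum_congr rfl fun i _ => sum_congr rfl fun j _ => by ring

lemma weightedPairSum_sub_mul (c c' D : Θ → Θ → ℝ) (l : ℝ) :
    weightedPairSum (fun i j => c' i j - l * c i j) D
      = weightedPairSum c' D - l * weightedPairSum c D := by
  simp only [weightedPairSum, mul_sum, ← sum_sub_distrib]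
  exact sum_congr rfl fun i _ => sum_congr rfl fun j _ => by ring

lemma weightedPairSum_KL_dilutedBernoulli (c : Θ → Θ → ℝ) {a : ℝ} {p : Θ → ℝ}
    (ha : a ∈ Set.Ioo (0 : ℝ) 1) (hp : ∀ i, p i ∈ Set.Ioo (0 : ℝ) 1) :
    weightedPairSum c (Experiment.dilutedBernoulli a p ha hp).KL
      = a * weightedPairSum c fun i j => bernoulliKL (p i) (p j) := by
  simp only [funext₂ (Experiment.KL_dilutedBernoulli ha hp), weightedPairSum_mul_right]

lemma weightedPairSum_bernoulliKL_mixedDiff (c : Θ → Θ → ℝ) {i j : Θ} (hij : i ≠ j) {s t : ℝ}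
    (hs : s ∈ Set.Ioo (0 : ℝ) 1) (ht : t ∈ Set.Ioo (0 : ℝ) 1) :
    let G := fun u v => weightedPairSum c fun k l =>
      bernoulliKL (testVector i j u v k) (testVector i j u v l)
    G s t - G s (1 / 2) - G (1 / 2) t + G (1 / 2) (1 / 2)
      = c i j * ((s - 1 / 2) * Real.log ((1 - t) / t))
        + c j i * ((t - 1 / 2) * Real.log ((1 - s) / s)) := by
  intro G
  simp only [G, weightedPairSum, ← sum_sub_distrib, ← sum_add_distrib, ← mul_sub, ← mul_add]
  rw [sum_sum_erase_eq_add_of_support hij]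
  · simp only [testVector, hij.symm, ↓reduceIte]
    rw [bernoulliKL_mixedDiff hs ht, ← bernoulliKL_mixedDiff ht hs]
    ring
  -- a pair missing `i` (resp. `j`) contributes a term independent of `s` (resp. `t`)
  · intro k l hkl hij' hji'
    by_cases hi : k ≠ i ∧ l ≠ i
    · simp only [testVector, if_neg hi.1, if_neg hi.2]
      ring
    · have hj : k ≠ j ∧ l ≠ j := by grind
      simp only [testVector, if_neg hj.1, if_neg hj.2]
      ring

lemma eq_zero_of_weightedPairSum_bernoulliKL_eq_zero {c : Θ → Θ → ℝ}
    (hc : ∀ p : Θ → ℝ, (∀ k, p k ∈ Set.Ioo (0 : ℝ) 1) →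
      weightedPairSum c (fun k l => bernoulliKL (p k) (p l)) = 0)
    {i j : Θ} (hij : i ≠ j) : c i j = 0 := by
  have hmixed : ∀ s t : ℝ, s ∈ Set.Ioo (0 : ℝ) 1 → t ∈ Set.Ioo (0 : ℝ) 1 →
      c i j * ((s - 1 / 2) * Real.log ((1 - t) / t))
        + c j i * ((t - 1 / 2) * Real.log ((1 - s) / s)) = 0 := by
    intro s t hs ht
    have half : (1 / 2 : ℝ) ∈ Set.Ioo 0 1 := by norm_num
    rw [← weightedPairSum_bernoulliKL_mixedDiff c hij hs ht]
    simp only [hc _ (testVector_mem_Ioo hs ht), hc _ (testVector_mem_Ioo hs half),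
      hc _ (testVector_mem_Ioo half ht), hc _ (testVector_mem_Ioo half half)]
    ring
  have hlog4 : Real.log ((1 - 1 / 4) / (1 / 4)) = Real.log 3 := by norm_num
  have hlog10 : Real.log ((1 - 1 / 10) / (1 / 10)) = 2 * Real.log 3 := by
    rw [← Real.log_rpow three_pos]
    norm_num
  have h44 := hmixed (1 / 4) (1 / 4) (by norm_num) (by norm_num)
  have h410 := hmixed (1 / 4) (1 / 10) (by norm_num) (by norm_num)
  rw [hlog4] at h44
  rw [hlog4, hlog10] at h410
  have hcL : c i j * Real.log 3 = 0 := by linear_combination 16 * h44 - 10 * h410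
  exact (mul_eq_zero.1 hcL).resolve_right (Real.log_pos (by norm_num)).ne'

end WeightedPairSum

lemma exists_pos_eq_mul_of_mul_le_iff {α : Type*} {F F' : α → ℝ} (hF : ∀ x, 0 ≤ F x)
    (h : ∀ r : ℝ, 0 < r → ∀ x y, r * F y ≤ F x ↔ r * F' y ≤ F' x) :
    ∃ l : ℝ, 0 < l ∧ ∀ x, F' x = l * F x := by
  have hF' : ∀ x, 0 ≤ F' x := fun x => by
    have := (h (1 / 2) (by norm_num) x x).1 (by linarith [hF x])
    linarith
  have hnonpos : ∀ x, F x ≤ 0 ↔ F' x ≤ 0 := fun x => by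
    have := h 2 two_pos x x
    constructor <;> intro hx
    · linarith [this.1 (by linarith)]
    · linarith [this.2 (by linarith)]
  have hzero : ∀ x, F x = 0 → F' x = 0 := fun x hx =>
    le_antisymm ((hnonpos x).1 hx.le) (hF' x)
  have hcross : ∀ x y, 0 < F y → F x * F' y ≤ F' x * F y := by
    intro x y hy
    rcases (hF x).eq_or_lt with hx | hx
    · simp [← hx, hzero x hx.symm]
    · have := (h (F x / F y) (by positivity) x y).1 (div_mul_cancel₀ _ hy.ne').le
      rwa [div_mul_eq_mul_div, div_le_iff₀ hy] at this
  by_cases hpos : ∃ y, 0 < F y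
  · obtain ⟨y, hy⟩ := hpos
    have hy' : 0 < F' y := lt_of_not_ge fun h0 => hy.not_ge ((hnonpos y).2 h0)
    refine ⟨F' y / F y, div_pos hy' hy, fun x => ?_⟩
    rw [div_mul_eq_mul_div, eq_div_iff hy.ne']
    rcases (hF x).eq_or_lt with hx | hx
    · simp [← hx, hzero x hx.symm]
    · linarith [hcross x y hy, hcross y x hx]
  · push Not at hpos
    exact ⟨1, one_pos, fun x => by
      rw [hzero x (le_antisymm (hpos x) (hF x)), le_antisymm (hpos x) (hF x), mul_zero]⟩

section Stmt17

variable {Θ : Type} [Fintype Θ] [Nonempty Θ] [DecidableEq Θ]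

theorem weightedKL_ordinal_proportional_general
    (β β' : Θ → Θ → ℝ)
    (hβ : ∀ i j, 0 ≤ β i j)
    (h : ∀ μ ν : Experiment Θ, μ.IsBdd → ν.IsBdd →
      ((∑ i, ∑ j ∈ Finset.univ.erase i, β i j * ν.KL i j) ≤
        (∑ i, ∑ j ∈ Finset.univ.erase i, β i j * μ.KL i j) ↔
       (∑ i, ∑ j ∈ Finset.univ.erase i, β' i j * ν.KL i j) ≤
        (∑ i, ∑ j ∈ Finset.univ.erase i, β' i j * μ.KL i j))) :
    ∃ l : ℝ, 0 < l ∧ ∀ i j : Θ, i ≠ j → β' i j = l * β i j := by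
  let F : (Θ → Θ → ℝ) → {p : Θ → ℝ // ∀ i, p i ∈ Set.Ioo (0 : ℝ) 1} → ℝ :=
    fun c p => weightedPairSum c fun i j => bernoulliKL (p.1 i) (p.1 j)
  have hscaled : ∀ r : ℝ, 0 < r → ∀ p q, r * F β q ≤ F β p ↔ r * F β' q ≤ F β' p := by
    intro r hr p q
    have ha : 1 / (1 + r) ∈ Set.Ioo (0 : ℝ) 1 :=
      ⟨by positivity, (div_lt_one (by positivity)).2 (by linarith)⟩
    have hb : r / (1 + r) ∈ Set.Ioo (0 : ℝ) 1 :=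
      ⟨by positivity, (div_lt_one (by positivity)).2 (by linarith)⟩
    have hcmp : ∀ X Y : ℝ, r / (1 + r) * X ≤ 1 / (1 + r) * Y ↔ r * X ≤ Y := fun X Y => by
      rw [div_mul_eq_mul_div, div_mul_eq_mul_div, one_mul,
        div_le_div_iff_of_pos_right (by positivity)]
    have := h _ _ (Experiment.isBdd_dilutedBernoulli ha p.2)
      (Experiment.isBdd_dilutedBernoulli hb q.2)
    change weightedPairSum β _ ≤ weightedPairSum β _ ↔
      weightedPairSum β' _ ≤ weightedPairSum β' _ at this
    rwa [weightedPairSum_KL_dilutedBernoulli, weightedPairSum_KL_dilutedBernoulli,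
      weightedPairSum_KL_dilutedBernoulli, weightedPairSum_KL_dilutedBernoulli, hcmp, hcmp] at this
  obtain ⟨l, hl, hprop⟩ := exists_pos_eq_mul_of_mul_le_iff
    (fun p => weightedPairSum_nonneg hβ fun i j => bernoulliKL_nonneg (p.2 i) (p.2 j)) hscaled
  refine ⟨l, hl, fun i j hij => ?_⟩
  have hdiff : β' i j - l * β i j = 0 :=
    eq_zero_of_weightedPairSum_bernoulliKL_eq_zero (c := fun i j => β' i j - l * β i j)
      (fun p hp => by rw [weightedPairSum_sub_mul, sub_eq_zero]; exact hprop ⟨p, hp⟩) hij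
  linarith

/-- **Claim (ordinal uniqueness of weighted KL costs).** If two weighted-KL functionals
with nonnegative weight matrices β, β' are ordinally equivalent on bounded experiments,
then the weights are proportional: β' = λ·β for some λ > 0. -/
theorem weightedKL_ordinal_proportional
    (hΘ : 2 ≤ Fintype.card Θ) (β β' : Θ → Θ → ℝ)
    (hβ : ∀ i j, 0 ≤ β i j) (hβ' : ∀ i j, 0 ≤ β' i j)
    (h : ∀ μ ν : Experiment Θ, μ.IsBdd → ν.IsBdd →
      ((∑ i, ∑ j ∈ Finset.univ.erase i, β i j * ν.KL i j) ≤
        (∑ i, ∑ j ∈ Finset.univ.erase i, β i j * μ.KL i j) ↔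
       (∑ i, ∑ j ∈ Finset.univ.erase i, β' i j * ν.KL i j) ≤
        (∑ i, ∑ j ∈ Finset.univ.erase i, β' i j * μ.KL i j))) :
    ∃ l : ℝ, 0 < l ∧ ∀ i j : Θ, i ≠ j → β' i j = l * β i j :=
  weightedKL_ordinal_proportional_general β β' hβ h

end Stmt17
end
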